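/- arXiv:1906.05832 — 2 statements merged into one kernel-verified Lean document; each statement's English description precedes it below -/
import Mathlib

section
/- Let $W \subseteq \mathbb{R}^n$ be a linear subspace and let $X \in \mathbb{R}^n$ be a random vector whose entries are i.i.d. copies of $\mathcal{B}_t$ (sum of $t$ independent uniform $\pm 1$ random variables). If each coordinate distribution satisfies $\Pr[\mathcal{B}_t = c] \le p$ for every $c \in \mathbb{R}$, then $\Pr[X \in W] \le p^{\,n - \dim(W)}$. -/
/-- The sum of `t` i.i.d. uniform `±1` random variables, as a function of the sign pattern. -/
def signSum (t : ℕ) (f : Fin t → Bool) : ℤ := ∑ i, if f i then 1 else -1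
open Classical
lemma exists_determining_set (n : ℕ) (W : Submodule ℝ (Fin n → ℝ)) :
    ∃ S : Finset (Fin n), S.card ≤ Module.finrank ℝ W ∧
      ∀ v ∈ W, ∀ w ∈ W, (∀ i ∈ S, v i = w i) → v = w := by
  classical
  set φ : Fin n → Module.Dual ℝ W := fun i => (LinearMap.proj i).comp W.subtype with hφ
  obtain ⟨I, hI, hmax⟩ := exists_maximal_linearIndepOn ℝ φ
  haveI : Fintype I := I.toFinite.fintype
  refine ⟨I.toFinset, ?_, ?_⟩
  · have h1 : Fintype.card I ≤ Module.finrank ℝ (Module.Dual ℝ W) := by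
      have : LinearIndependent ℝ (fun x : I => φ x) := hI
      exact this.fintype_card_le_finrank
    rw [Set.toFinset_card]
    rwa [Subspace.dual_finrank_eq] at h1
  · intro v hv w hw hvw
    set u : W := ⟨v, hv⟩ - ⟨w, hw⟩ with hu
    have hcoord : ∀ i, φ i u = v i - w i := fun i => rfl
    have hzeroI : ∀ i ∈ I, φ i u = 0 := by
      intro i hi
      rw [hcoord]
      have := hvw i (Set.mem_toFinset.mpr hi)
      linarith
    have hspan : ∀ ψ ∈ Submodule.span ℝ (φ '' I), ψ u = 0 := by
      intro ψ hψ
      induction hψ using Submodule.span_induction with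
      | mem x hx => obtain ⟨i, hi, rfl⟩ := hx; exact hzeroI i hi
      | zero => rfl
      | add x y _ _ hx hy => simp [hx, hy]
      | smul a x _ hx => simp [hx]
    have hall : ∀ i, φ i u = 0 := by
      intro i
      by_cases hi : i ∈ I
      · exact hzeroI i hi
      · obtain ⟨a, ha, hmem⟩ := hmax i hi
        have := hspan _ hmem
        simp only [LinearMap.smul_apply, smul_eq_mul] at this
        exact (mul_eq_zero.mp this).resolve_left ha
    have : ∀ i, v i - w i = 0 := fun i => by rw [← hcoord]; exact hall i
    funext i
    linarith [this i]
/-- Odlyzko's bound: if `X ∈ ℝⁿ` has i.i.d. coordinates distributed as `𝓑_t` (the sum of `t`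
uniform `±1` signs) and every atom of `𝓑_t` has probability at most `p`, then
`Pr[X ∈ W] ≤ p^(n - dim W)` for any linear subspace `W ⊆ ℝⁿ`. -/
theorem prob_vector_in_subspace (n t : ℕ) (W : Submodule ℝ (Fin n → ℝ)) (p : ℝ)
    (hp : ∀ c : ℤ, ((Finset.univ.filter fun f : Fin t → Bool => signSum t f = c).card : ℝ) / 2 ^ t ≤ p) :
    ((Finset.univ.filter fun ω : Fin n → Fin t → Bool =>
        (fun i => (signSum t (ω i) : ℝ)) ∈ W).card : ℝ) / 2 ^ (n * t)
      ≤ p ^ (n - Module.finrank ℝ W) := by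
  classical
  have hp0 : 0 ≤ p := le_trans (by positivity) (hp 0)
  have h2nt : (0:ℝ) < 2 ^ (n * t) := by positivity
  set k := Module.finrank ℝ W with hk
  set A := Finset.univ.filter fun ω : Fin n → Fin t → Bool =>
      (fun i => (signSum t (ω i) : ℝ)) ∈ W with hA
  have hcardA : (A.card : ℝ) ≤ 2 ^ (n * t) := by
    have h1 : A.card ≤ Finset.univ.card := Finset.card_filter_le _ _
    rw [Finset.card_univ] at h1
    have hcu : Fintype.card (Fin n → Fin t → Bool) = 2 ^ (n * t) := by
      rw [Fintype.card_fun, Fintype.card_fun, Fintype.card_bool, Fintype.card_fin,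
        Fintype.card_fin, ← pow_mul, mul_comm]
    rw [hcu] at h1
    exact_mod_cast h1
  by_cases hp1 : p ≤ 1
  swap
  · push_neg at hp1
    rw [div_le_iff₀ h2nt]
    calc (A.card : ℝ) ≤ 2 ^ (n * t) := hcardA
      _ = 1 * 2 ^ (n * t) := (one_mul _).symm
      _ ≤ p ^ (n - k) * 2 ^ (n * t) :=
          mul_le_mul_of_nonneg_right (one_le_pow₀ hp1.le) h2nt.le
  obtain ⟨S, hScard, hdet⟩ := exists_determining_set n W
  have hSn : S.card ≤ n := by simpa using Finset.card_le_card (Finset.subset_univ S)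
  have hfiber : ∀ ρ : ↥S → Fin t → Bool,
      (((A.filter fun ω => (fun i : ↥S => ω i.1) = ρ).card : ℝ)) ≤ (p * 2 ^ t) ^ (n - S.card) := by
    intro ρ
    rcases (A.filter fun ω => (fun i : ↥S => ω i.1) = ρ).eq_empty_or_nonempty with he | ⟨ω₀, hω₀⟩
    · rw [he]; simp; positivity
    · rw [Finset.mem_filter, hA, Finset.mem_filter] at hω₀
      obtain ⟨⟨-, hω₀W⟩, hω₀ρ⟩ := hω₀
      set T : Fin n → Finset (Fin t → Bool) := fun i =>
        if i ∈ S then {ω₀ i} else Finset.univ.filter fun f => signSum t f = signSum t (ω₀ i) with hT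
      have hsub : (A.filter fun ω => (fun i : ↥S => ω i.1) = ρ) ⊆ Fintype.piFinset T := by
        intro ω hω
        rw [Finset.mem_filter, hA, Finset.mem_filter] at hω
        obtain ⟨⟨-, hωW⟩, hωρ⟩ := hω
        have heqS : ∀ i ∈ S, ω i = ω₀ i := by
          intro i hi
          have h1 := congrFun hωρ ⟨i, hi⟩
          have h2 := congrFun hω₀ρ ⟨i, hi⟩
          simp only at h1 h2
          rw [h1, h2]
        have hveq : (fun i => (signSum t (ω i) : ℝ)) = fun i => (signSum t (ω₀ i) : ℝ) := by
          refine hdet _ hωW _ hω₀W ?_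
          intro i hi
          simp only [heqS i hi]
        rw [Fintype.mem_piFinset]
        intro i
        rw [hT]
        by_cases hi : i ∈ S
        · simp [hi, heqS i hi]
        · simp only [hi, if_false, Finset.mem_filter, Finset.mem_univ, true_and]
          have := congrFun hveq i
          exact_mod_cast this
      have hTcard : ((Fintype.piFinset T).card : ℝ) = ∏ i, ((T i).card : ℝ) := by
        rw [Fintype.card_piFinset]; push_cast; rfl
      have hc1 : ((A.filter fun ω => (fun i : ↥S => ω i.1) = ρ).card : ℝ)
          ≤ ((Fintype.piFinset T).card : ℝ) := by exact_mod_cast Finset.card_le_card hsub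
      have hc2 : (∏ i, ((T i).card : ℝ)) = (∏ i ∈ S, ((T i).card : ℝ)) * ∏ i ∈ Sᶜ, ((T i).card : ℝ) :=
          (Finset.prod_mul_prod_compl S _).symm
      have hc3 : (∏ i ∈ S, ((T i).card : ℝ)) = 1 := by
        apply Finset.prod_eq_one
        intro i hi
        rw [hT]; simp [hi]
      have hc4 : (∏ i ∈ Sᶜ, ((T i).card : ℝ)) ≤ (p * 2 ^ t) ^ (n - S.card) := by
        have hcompl : Sᶜ.card = n - S.card := by
          simp [Finset.card_compl]
        rw [← hcompl, ← Finset.prod_const]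
        apply Finset.prod_le_prod
        · intro i _; positivity
        · intro i hi
          rw [Finset.mem_compl] at hi
          rw [hT]
          simp only [hi, if_false]
          have := hp (signSum t (ω₀ i))
          rw [div_le_iff₀ (by positivity : (0:ℝ) < 2 ^ t)] at this
          exact this
      have hc5 : (0:ℝ) ≤ ∏ i ∈ Sᶜ, ((T i).card : ℝ) :=
        Finset.prod_nonneg fun i _ => Nat.cast_nonneg _
      calc ((A.filter fun ω => (fun i : ↥S => ω i.1) = ρ).card : ℝ)
          ≤ ((Fintype.piFinset T).card : ℝ) := hc1
        _ = ∏ i, ((T i).card : ℝ) := hTcard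
        _ = (∏ i ∈ S, ((T i).card : ℝ)) * ∏ i ∈ Sᶜ, ((T i).card : ℝ) := hc2
        _ = ∏ i ∈ Sᶜ, ((T i).card : ℝ) := by rw [hc3, one_mul]
        _ ≤ (p * 2 ^ t) ^ (n - S.card) := hc4
  have hkey : (A.card : ℝ) ≤ (2 ^ t : ℝ) ^ S.card * (p * 2 ^ t) ^ (n - S.card) := by
    have hsum : A.card = ∑ ρ : ↥S → Fin t → Bool,
        (A.filter fun ω => (fun i : ↥S => ω i.1) = ρ).card := by
      apply Finset.card_eq_sum_card_fiberwise
      intro ω _; exact Finset.mem_univ _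
    rw [hsum]
    push_cast
    calc (∑ ρ : ↥S → Fin t → Bool,
          ((A.filter fun ω => (fun i : ↥S => ω i.1) = ρ).card : ℝ))
        ≤ ∑ _ρ : ↥S → Fin t → Bool, (p * 2 ^ t) ^ (n - S.card) :=
          Finset.sum_le_sum fun ρ _ => hfiber ρ
      _ = (Fintype.card (↥S → Fin t → Bool) : ℝ) * (p * 2 ^ t) ^ (n - S.card) := by
          rw [Finset.sum_const, Finset.card_univ, nsmul_eq_mul]
      _ = (2 ^ t : ℝ) ^ S.card * (p * 2 ^ t) ^ (n - S.card) := by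
          congr 1
          rw [Fintype.card_fun]
          push_cast
          simp [Fintype.card_coe]
  rw [div_le_iff₀ h2nt]
  have hfinal : (2 ^ t : ℝ) ^ S.card * (p * 2 ^ t) ^ (n - S.card) = p ^ (n - S.card) * 2 ^ (n * t) := by
    have h1 : S.card + (n - S.card) = n := Nat.add_sub_cancel' hSn
    rw [mul_pow, show (2:ℝ) ^ (n * t) = (2 ^ t) ^ S.card * (2 ^ t) ^ (n - S.card) by
      rw [← pow_add, h1, ← pow_mul, mul_comm t n]]
    ring
  calc (A.card : ℝ) ≤ (2 ^ t : ℝ) ^ S.card * (p * 2 ^ t) ^ (n - S.card) := hkey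
    _ = p ^ (n - S.card) * 2 ^ (n * t) := hfinal
    _ ≤ p ^ (n - k) * 2 ^ (n * t) :=
        mul_le_mul_of_nonneg_right
          (pow_le_pow_of_le_one hp0 hp1 (Nat.sub_le_sub_left hScard n)) h2nt.le
end

section
/- Fix an integer $L \ge 1$ sufficiently large, and for $1 \le i \le 2^{L/100}$ define $m_i = (i/2^L,\; 1 - i^2/(2 \cdot 4^L)) \in \mathbb{R}^2$. Then: (1) for every such $i$, $\|m_i\|_2^2 \ge 1 + 2^{-(4L+2)}$; and (2) for every $i \ne j$ in this range, $\langle m_i, m_j \rangle \le 1$. -/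
open scoped RealInnerProductSpace

/-- The vector `m_i = (i/2^L, 1 - i²/(2·4^L)) ∈ ℝ²`. -/
noncomputable def mvec (L i : ℕ) : EuclideanSpace ℝ (Fin 2) :=
  (WithLp.equiv 2 (Fin 2 → ℝ)).symm
    ![(i : ℝ) / 2 ^ L, 1 - (i : ℝ) ^ 2 / (2 * 4 ^ L)]

lemma inner_mvec (L i j : ℕ) :
    ⟪mvec L i, mvec L j⟫ =
      1 - ((i : ℝ) - j) ^ 2 / (2 * 4 ^ L) + (i : ℝ) ^ 2 * j ^ 2 / 4 ^ (2 * L + 1) := by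
  have h4 : (4 : ℝ) ^ L = 2 ^ L * 2 ^ L := by rw [← mul_pow]; norm_num
  simp only [mvec, PiLp.inner_apply, Fin.sum_univ_two, WithLp.equiv_symm_apply,
    Matrix.cons_val_zero, Matrix.cons_val_one, RCLike.inner_apply, conj_trivial]
  rw [show (4 : ℝ) ^ (2 * L + 1) = 4 * (4 ^ L) ^ 2 by ring, h4]
  field_simp
  ring

lemma norm_mvec_sq (L i : ℕ) : ‖mvec L i‖ ^ 2 = 1 + (i : ℝ) ^ 4 / 2 ^ (4 * L + 2) := by
  rw [← real_inner_self_eq_norm_sq, inner_mvec, sub_self,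
    show (2 : ℝ) ^ (4 * L + 2) = 4 ^ (2 * L + 1) by
      rw [show (4 : ℝ) = 2 ^ 2 by norm_num, ← pow_mul]; ring_nf]
  ring

lemma inner_mvec_le_one {L i j : ℕ} (hij : i ≠ j) (hmul : i * j ≤ 2 ^ L) :
    ⟪mvec L i, mvec L j⟫ ≤ 1 := by
  have hsep : (1 : ℝ) ≤ ((i : ℝ) - j) ^ 2 := by
    rcases hij.lt_or_gt with h | h
    · nlinarith [show (i : ℝ) + 1 ≤ j by exact_mod_cast h]
    · nlinarith [show (j : ℝ) + 1 ≤ i by exact_mod_cast h]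
  have hprod : (i : ℝ) ^ 2 * j ^ 2 ≤ 4 ^ L := by
    have : ((i * j : ℕ) : ℝ) ≤ 2 ^ L := by exact_mod_cast hmul
    rw [← mul_pow, show (4 : ℝ) ^ L = (2 ^ L) ^ 2 by rw [← pow_mul, mul_comm, pow_mul]; norm_num]
    push_cast at this
    gcongr
  have h4 : (0 : ℝ) < 4 ^ L := by positivity
  have key : (i : ℝ) ^ 2 * j ^ 2 / 4 ^ (2 * L + 1) ≤ ((i : ℝ) - j) ^ 2 / (2 * 4 ^ L) := by
    rw [show (4 : ℝ) ^ (2 * L + 1) = 4 * (4 ^ L) ^ 2 by ring,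
      div_le_div_iff₀ (by positivity) (by positivity)]
    nlinarith [mul_le_mul hprod hsep zero_le_one h4.le]
  rw [inner_mvec]
  linarith

theorem mvec_properties_general (L : ℕ) :
    (∀ i : ℕ, 1 ≤ i → i ≤ 2 ^ (L / 100) →
      (1 : ℝ) + (2 : ℝ) ^ (-(4 * (L : ℤ) + 2)) ≤ ‖mvec L i‖ ^ 2) ∧
    (∀ i j : ℕ, 1 ≤ i → i ≤ 2 ^ (L / 100) → 1 ≤ j → j ≤ 2 ^ (L / 100) → i ≠ j →
      ⟪mvec L i, mvec L j⟫ ≤ 1) := by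
  refine ⟨fun i hi _ => ?_, fun i j _ hi _ hj hij => inner_mvec_le_one hij ?_⟩
  · have hi4 : (1 : ℝ) ≤ (i : ℝ) ^ 4 := one_le_pow₀ (by exact_mod_cast hi)
    rw [norm_mvec_sq, show -(4 * (L : ℤ) + 2) = -((4 * L + 2 : ℕ) : ℤ) by push_cast; ring,
      zpow_neg, zpow_natCast, ← one_div]
    gcongr
  · calc i * j ≤ 2 ^ (L / 100) * 2 ^ (L / 100) := Nat.mul_le_mul hi hj
      _ ≤ 2 ^ L := by rw [← pow_add]; exact Nat.pow_le_pow_right two_pos (by omega)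

/-- For `1 ≤ i, j ≤ 2^{L/100}`: `‖m_i‖² ≥ 1 + 2^{-(4L+2)}`, and `⟨m_i, m_j⟩ ≤ 1` for `i ≠ j`. -/
theorem mvec_properties (L : ℕ) (hL : 1 ≤ L) :
    (∀ i : ℕ, 1 ≤ i → i ≤ 2 ^ (L / 100) →
      (1 : ℝ) + (2 : ℝ) ^ (-(4 * (L : ℤ) + 2)) ≤ ‖mvec L i‖ ^ 2) ∧
    (∀ i j : ℕ, 1 ≤ i → i ≤ 2 ^ (L / 100) → 1 ≤ j → j ≤ 2 ^ (L / 100) → i ≠ j →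
      ⟪mvec L i, mvec L j⟫ ≤ 1) :=
  mvec_properties_general L
end
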